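/- arXiv:1511.05913 — 5 statements merged into one kernel-verified Lean document; each statement's English description precedes it below -/
import Mathlib

section
/- Let Ω be a finite set, φ: Ω → ℝ be λ-Lipschitz with respect to a metric d on Ω (i.e., |φ(x) − φ(y)| ≤ λ d(x,y)), let x* maximize φ, and let B = {x ∈ Ω : d(x, x*) ≤ δ}. Then for the Gibbs distribution π^β with β > 0: E_{π^β}[φ] ≥ φ(x*) − δλ + (1/β) log(|B| / |Ω|). -/
open Finset Real

/-!
Write `Z = ∑ exp (β φ)` and `n = |Ω|`. Jensen's inequality for the convex function `t ↦ t log t`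
at the points `exp (β φ x)` says exactly that the Gibbs mean of `β φ` is at least `log (Z / n)`.
On the ball `B` the Lipschitz bound gives `φ ≥ φ x* - δ λ`, so `Z ≥ |B| exp (β (φ x* - δ λ))`.
-/

theorem sum_div_card_mul_log_le {ι : Type*} [Fintype ι] [Nonempty ι] {a : ι → ℝ}
    (ha : ∀ i, 0 ≤ a i) :
    (∑ i, a i) / Fintype.card ι * log ((∑ i, a i) / Fintype.card ι) ≤
      (∑ i, a i * log (a i)) / Fintype.card ι := by
  have hn : (0 : ℝ) < Fintype.card ι := by exact_mod_cast Fintype.card_pos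
  have h := convexOn_mul_log.map_sum_le (t := univ) (w := fun _ ↦ (Fintype.card ι : ℝ)⁻¹)
    (p := a) (fun _ _ ↦ by positivity) (by simp [hn.ne']) (fun i _ ↦ ha i)
  simpa only [smul_eq_mul, ← mul_sum, div_eq_inv_mul] using h

theorem log_mean_exp_le_sum_mul_softmax {ι : Type*} [Fintype ι] [Nonempty ι] (f : ι → ℝ) :
    log ((∑ i, exp (f i)) / Fintype.card ι) ≤ ∑ i, f i * (exp (f i) / ∑ j, exp (f j)) := by
  set Z := ∑ j, exp (f j)
  have hZ : 0 < Z := sum_pos (fun _ _ ↦ exp_pos _) univ_nonempty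
  have hn : (0 : ℝ) < Fintype.card ι := by exact_mod_cast Fintype.card_pos
  have hjensen := sum_div_card_mul_log_le (a := fun i ↦ exp (f i)) (fun _ ↦ (exp_pos _).le)
  simp only [log_exp] at hjensen
  calc log (Z / Fintype.card ι)
      = Z / Fintype.card ι * log (Z / Fintype.card ι) * (Fintype.card ι / Z) := by
        field_simp
    _ ≤ (∑ i, exp (f i) * f i) / Fintype.card ι * (Fintype.card ι / Z) := by gcongr
    _ = ∑ i, f i * (exp (f i) / Z) := by
        rw [div_mul_div_cancel₀ hn.ne', sum_div]
        exact sum_congr rfl fun i _ ↦ by ring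

theorem card_mul_exp_le_sum_exp {ι : Type*} [Fintype ι] (f : ι → ℝ) (s : Finset ι) {c : ℝ}
    (hc : ∀ i ∈ s, c ≤ f i) :
    #s * exp c ≤ ∑ i, exp (f i) :=
  calc #s * exp c = ∑ _i ∈ s, exp c := by rw [sum_const, nsmul_eq_mul]
    _ ≤ ∑ i ∈ s, exp (f i) := sum_le_sum fun i hi ↦ exp_le_exp.mpr (hc i hi)
    _ ≤ ∑ i, exp (f i) := sum_le_sum_of_subset_of_nonneg (subset_univ s)
        fun _ _ _ ↦ (exp_pos _).le

theorem stmt_4_general {Ω : Type*} [Fintype Ω] [MetricSpace Ω]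
    (φ : Ω → ℝ) (lam : ℝ) (hlam : 0 ≤ lam)
    (hlip : ∀ x y, |φ x - φ y| ≤ lam * dist x y)
    (xs : Ω)
    (δ : ℝ) (hδ : 0 < δ) (β : ℝ) (hβ : 0 < β) :
    ∑ x, φ x * (Real.exp (β * φ x) / ∑ y, Real.exp (β * φ y)) ≥
      φ xs - δ * lam + (1 / β) *
        Real.log ((Nat.card {x : Ω // dist x xs ≤ δ} : ℝ) / (Fintype.card Ω : ℝ)) := by
  classical
  have : Nonempty Ω := ⟨xs⟩
  set B := univ.filter fun x ↦ dist x xs ≤ δ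
  have hB : (Nat.card {x // dist x xs ≤ δ} : ℝ) = #B := by
    rw [Nat.card_eq_fintype_card, Fintype.card_subtype]
  have hBpos : (0 : ℝ) < #B := by exact_mod_cast card_pos.mpr ⟨xs, by simpa [B] using hδ.le⟩
  have hball : ∀ x ∈ B, β * (φ xs - δ * lam) ≤ β * φ x := fun x hx ↦ by
    have hdist : lam * dist x xs ≤ lam * δ := by gcongr; exact (mem_filter.mp hx).2
    have := (abs_le.mp ((hlip x xs).trans hdist)).1
    gcongr
    linarith
  have hZ := card_mul_exp_le_sum_exp (fun x ↦ β * φ x) B hball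
  have hgibbs := log_mean_exp_le_sum_mul_softmax fun x ↦ β * φ x
  rw [hB, ge_iff_le]
  calc φ xs - δ * lam + 1 / β * log (#B / Fintype.card Ω)
      = 1 / β * log (#B * exp (β * (φ xs - δ * lam)) / Fintype.card Ω) := by
        rw [mul_div_right_comm, log_mul (by positivity) (exp_pos _).ne', log_exp]
        field_simp
        ring
    _ ≤ 1 / β * log ((∑ x, exp (β * φ x)) / Fintype.card Ω) := by gcongr
    _ ≤ 1 / β * ∑ x, β * φ x * (exp (β * φ x) / ∑ y, exp (β * φ y)) := by gcongr
    _ = ∑ x, φ x * (exp (β * φ x) / ∑ y, exp (β * φ y)) := by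
        rw [mul_sum]
        exact sum_congr rfl fun x _ ↦ by field_simp

/-- Gibbs expectation lower bound via a ball around the maximizer, for Lipschitz φ. -/
theorem stmt_4 {Ω : Type*} [Fintype Ω] [Nonempty Ω] [MetricSpace Ω]
    (φ : Ω → ℝ) (lam : ℝ) (hlam : 0 ≤ lam)
    (hlip : ∀ x y, |φ x - φ y| ≤ lam * dist x y)
    (xs : Ω) (hxs : ∀ x, φ x ≤ φ xs)
    (δ : ℝ) (hδ : 0 < δ) (β : ℝ) (hβ : 0 < β) :
    ∑ x, φ x * (Real.exp (β * φ x) / ∑ y, Real.exp (β * φ y)) ≥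
      φ xs - δ * lam + (1 / β) *
        Real.log ((Nat.card {x : Ω // dist x xs ≤ δ} : ℝ) / (Fintype.card Ω : ℝ)) :=
  stmt_4_general φ lam hlam hlip xs δ hδ β hβ
end

section
/- Let X be the set of s-tuples of nonnegative integers summing to n (a population's aggregate state space). For any x* ∈ X and δ ∈ (0,1], the 1-norm ball B(x*, δ) = {x ∈ X : (1/n)‖x − x*‖_1 ≤ δ} satisfies |B(x*, δ)| ≥ (δ(n+1)/(2s))^{s−1}. -/
open Finset

/-- Existence of a pointwise-dominated vector with prescribed sum. -/
lemma stmt8_exists_d {s : ℕ} (xs : Fin s → ℕ) :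
    ∀ D : ℕ, D ≤ ∑ k, xs k → ∃ d : Fin s → ℕ, (∀ k, d k ≤ xs k) ∧ ∑ k, d k = D := by
  intro D
  induction D with
  | zero => exact fun _ => ⟨fun _ => 0, fun k => Nat.zero_le _, by simp⟩
  | succ D ih =>
    intro hD
    obtain ⟨d, hle, hsum⟩ := ih (Nat.le_of_succ_le hD)
    have hex : ∃ k, d k < xs k := by
      by_contra h
      push_neg at h
      have : ∑ k, xs k ≤ ∑ k, d k := Finset.sum_le_sum fun k _ => h k
      omega
    obtain ⟨k, hk⟩ := hex
    refine ⟨fun j => d j + (Pi.single k 1 : Fin s → ℕ) j, ?_, ?_⟩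
    · intro j
      rcases eq_or_ne j k with rfl | hj
      · simpa using hk
      · simpa [Pi.single_eq_of_ne hj] using hle j
    · rw [Finset.sum_add_distrib, hsum, Finset.sum_pi_single']
      simp

/-- `(a/b)^b ≤ choose a b`. -/
lemma stmt8_pow_div_le_choose : ∀ (b a : ℕ), b ≤ a → ((a : ℝ) / b) ^ b ≤ (a.choose b : ℝ) := by
  intro b
  induction b with
  | zero => intro a _; simp
  | succ b ih =>
    intro a hba
    obtain ⟨c, rfl⟩ : ∃ c, a = c + 1 := ⟨a - 1, by omega⟩
    have hbc : b ≤ c := by omega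
    set X : ℝ := ((c : ℝ) + 1) / ((b : ℝ) + 1) with hX
    have hX0 : 0 ≤ X := by positivity
    have hXb : X ^ b ≤ ((c.choose b : ℕ) : ℝ) := by
      rcases Nat.eq_zero_or_pos b with rfl | hb
      · simp
      · have hb' : (0 : ℝ) < b := by exact_mod_cast hb
        have hXle : X ≤ (c : ℝ) / b := by
          rw [hX, div_le_div_iff₀ (by positivity) hb']
          have : (b : ℝ) ≤ (c : ℝ) := by exact_mod_cast hbc
          nlinarith
        calc X ^ b ≤ ((c : ℝ) / b) ^ b := pow_le_pow_left₀ hX0 hXle b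
          _ ≤ _ := ih c hbc
    have hid : ((c : ℝ) + 1) * (c.choose b : ℝ) = ((c + 1).choose (b + 1) : ℝ) * ((b : ℝ) + 1) := by
      have := Nat.add_one_mul_choose_eq c b
      exact_mod_cast this
    have hcast : ((c + 1 : ℕ) : ℝ) / ((b + 1 : ℕ) : ℝ) = X := by push_cast [hX]; ring
    rw [hcast, pow_succ]
    calc X ^ b * X ≤ (c.choose b : ℝ) * X := mul_le_mul_of_nonneg_right hXb hX0
      _ = ((c + 1).choose (b + 1) : ℝ) := by
          rw [hX]
          rw [mul_div_assoc'] at *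
          field_simp
          linarith [hid]

/-- Lower bound on the size of a 1-norm ball in the simplex lattice. -/
theorem stmt_8 (n s : ℕ) (hn : 1 ≤ n) (hs : 2 ≤ s)
    (xs : Fin s → ℕ) (hxs : ∑ k, xs k = n)
    (δ : ℝ) (hδ0 : 0 < δ) (hδ1 : δ ≤ 1) :
    (δ * (n + 1) / (2 * s)) ^ (s - 1) ≤
      (Nat.card {v : Fin s → ℕ //
        (∑ k, v k = n) ∧ (∑ k, |(v k : ℝ) - (xs k : ℝ)|) / n ≤ δ} : ℝ) := by
  obtain ⟨b, rfl⟩ : ∃ b, s = b + 2 := ⟨s - 2, by omega⟩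
  have hn0 : (0 : ℝ) < n := by exact_mod_cast hn
  set m : ℕ := ⌊δ * n / 2⌋₊ with hm
  have hm_le : (m : ℝ) ≤ δ * n / 2 := Nat.floor_le (by positivity)
  have hm_lt : δ * n / 2 < (m : ℝ) + 1 := Nat.lt_floor_add_one _
  have hmn : m ≤ n := by
    have : (m : ℝ) ≤ (n : ℝ) := by nlinarith
    exact_mod_cast this
  obtain ⟨d, hd, hdsum⟩ := stmt8_exists_d xs m (by omega)
  -- the ball as a subtype
  set Ball := {v : Fin (b + 2) → ℕ //
      (∑ k, v k = n) ∧ (∑ k, |(v k : ℝ) - (xs k : ℝ)|) / n ≤ δ} with hBall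
  haveI : Finite Ball := by
    apply Finite.of_injective (fun v : Ball =>
      (fun k => (⟨v.1 k, by
        have h1 : v.1 k ≤ ∑ i, v.1 i :=
          Finset.single_le_sum (fun i _ => Nat.zero_le _) (Finset.mem_univ k)
        have := v.2.1
        omega⟩ : Fin (n + 1))))
    intro v w h
    apply Subtype.ext; funext k
    have := congrFun h k
    simpa using congrArg Fin.val this
  have hsub : ∑ k, (xs k - d k) = n - m := by
    have h1 : ∑ k, (xs k - d k) + ∑ k, d k = ∑ k, xs k := by
      rw [← Finset.sum_add_distrib]
      exact Finset.sum_congr rfl fun k _ => Nat.sub_add_cancel (hd k)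
    omega
  -- the injection from tuples summing to m
  set A := {t : Fin (b + 2) → ℕ // ∑ k, t k = m} with hA
  have key : Nat.card A ≤ Nat.card Ball := by
    have hFprop : ∀ t : A, (∑ k, (xs k - d k + t.1 k) = n) ∧
        (∑ k, |(((xs k - d k + t.1 k : ℕ)) : ℝ) - (xs k : ℝ)|) / n ≤ δ := by
      intro t
      constructor
      · rw [Finset.sum_add_distrib, hsub, t.2]; omega
      · rw [div_le_iff₀ hn0]
        have hpt : ∀ k, |(((xs k - d k + t.1 k : ℕ)) : ℝ) - (xs k : ℝ)| ≤
            (t.1 k : ℝ) + (d k : ℝ) := by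
          intro k
          have hc : (((xs k - d k + t.1 k : ℕ)) : ℝ) = (xs k : ℝ) - d k + t.1 k := by
            push_cast [Nat.cast_sub (hd k)]; ring
          rw [hc]
          have h1 : (0 : ℝ) ≤ t.1 k := Nat.cast_nonneg _
          have h2 : (0 : ℝ) ≤ d k := Nat.cast_nonneg _
          rw [abs_le]; constructor <;> [linarith; linarith]
        calc ∑ k, |(((xs k - d k + t.1 k : ℕ)) : ℝ) - (xs k : ℝ)|
            ≤ ∑ k, ((t.1 k : ℝ) + (d k : ℝ)) := Finset.sum_le_sum fun k _ => hpt k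
          _ = (m : ℝ) + (m : ℝ) := by
              rw [Finset.sum_add_distrib]
              push_cast [← Nat.cast_sum]
              rw [t.2, hdsum]
          _ ≤ δ * n := by linarith
    exact Nat.card_le_card_of_injective
      (fun t : A => (⟨fun k => xs k - d k + t.1 k, hFprop t⟩ : Ball))
      (by
        intro t t' h
        apply Subtype.ext; funext k
        have := congrFun (congrArg Subtype.val h) k
        simp only at this
        omega)
  have hcardA : Nat.card A = (m + b + 1).choose (b + 1) := by
    have e := Sym.equivNatSumOfFintype (Fin (b + 2)) m
    have h1 : Nat.card A = Fintype.card (Sym (Fin (b + 2)) m) := by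
      rw [← Nat.card_eq_fintype_card]
      exact (Nat.card_congr e).symm
    rw [h1, Sym.card_sym_eq_choose]
    have h2 : Fintype.card (Fin (b + 2)) + m - 1 = m + b + 1 := by simp; omega
    rw [h2]
    have h3 := Nat.choose_symm (show b + 1 ≤ m + b + 1 by omega)
    have h4 : m + b + 1 - (b + 1) = m := by omega
    rw [h4] at h3
    exact h3
  -- main real inequality
  have hx : δ * ((n : ℝ) + 1) / (2 * ((b : ℝ) + 2)) ≤ ((m : ℝ) + b + 1) / ((b : ℝ) + 1) := by
    rw [div_le_div_iff₀ (by positivity) (by positivity)]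
    have hb0 : (0 : ℝ) ≤ b := Nat.cast_nonneg _
    rcases le_or_gt ((b : ℝ) + 1) (n : ℝ) with hcase | hcase
    · nlinarith
    · nlinarith [mul_nonneg (sub_nonneg.mpr hδ1) (sub_nonneg.mpr hcase.le)]
  have hgoal : (δ * ((n : ℝ) + 1) / (2 * ((b : ℝ) + 2))) ^ (b + 1) ≤ (Nat.card Ball : ℝ) := by
    have hch := stmt8_pow_div_le_choose (b + 1) (m + b + 1) (by omega)
    have hcast : (((m + b + 1 : ℕ)) : ℝ) / (((b + 1 : ℕ)) : ℝ) = ((m : ℝ) + b + 1) / ((b : ℝ) + 1) := by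
      push_cast; ring
    rw [hcast] at hch
    calc (δ * ((n : ℝ) + 1) / (2 * ((b : ℝ) + 2))) ^ (b + 1)
        ≤ (((m : ℝ) + b + 1) / ((b : ℝ) + 1)) ^ (b + 1) :=
          pow_le_pow_left₀ (by positivity) hx _
      _ ≤ ((m + b + 1).choose (b + 1) : ℝ) := hch
      _ = (Nat.card A : ℝ) := by rw [hcardA]
      _ ≤ (Nat.card Ball : ℝ) := by exact_mod_cast key
  have hexp : b + 2 - 1 = b + 1 := by omega
  rw [hexp]
  have hc2 : ((b + 2 : ℕ) : ℝ) = (b : ℝ) + 2 := by push_cast; ring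
  rw [hc2]
  exact hgoal
end

section
/- Let M be a reversible Markov kernel on a finite state space Ω with stationary distribution π and Sobolev constant ρ(M) = inf{E(f,f)/L(f) : f with L(f) ≠ 0}, where E(f,f) = (1/2)Σ_{x,y}(f(x)−f(y))^2 M(x,y) π_x and L(f) = E_π[f^2 log(f^2/E_π f^2)]. Suppose M' is another reversible kernel on Ω with stationary distribution π' satisfying M(x,y) ≥ (1/c) M'(x,y) for x ≠ y and (1/c) π'_x ≤ π_x ≤ c π'_x for some c ≥ 1. Then ρ(M) ≥ c^{−3} ρ(M'). -/
lemma phi_nonneg (u t : ℝ) (hu : 0 ≤ u) (ht : 0 < t) :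
    0 ≤ u * Real.log (u / t) - u + t := by
  rcases eq_or_lt_of_le hu with h | h
  · simp [← h]; linarith
  · have h1 : Real.log (t / u) ≤ t / u - 1 := Real.log_le_sub_one_of_pos (by positivity)
    have h2 : Real.log (u / t) = - Real.log (t / u) := by
      rw [← Real.log_inv]; congr 1; field_simp
    have h3 := mul_le_mul_of_nonneg_left h1 h.le
    have h4 : u * (t / u - 1) = t - u := by field_simp
    rw [h2]
    nlinarith

lemma log_split (a m t : ℝ) (ha : 0 ≤ a) (hm : 0 < m) (ht : 0 < t) :
    a * Real.log (a / t) = a * Real.log (a / m) + a * Real.log (m / t) := by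
  rcases eq_or_lt_of_le ha with h | h
  · simp [← h]
  · have : a / t = (a / m) * (m / t) := by field_simp
    rw [this, Real.log_mul (by positivity) (by positivity), mul_add]

/-- The Dirichlet form E(f,f) of a kernel with its stationary distribution. -/
noncomputable def dirichletForm {Ω : Type*} [Fintype Ω]
    (M : Ω → Ω → ℝ) (π : Ω → ℝ) (f : Ω → ℝ) : ℝ :=
  (1 / 2) * ∑ x, ∑ y, (f x - f y) ^ 2 * M x y * π x

/-- L(f) = E_π[f² log(f²/E_π f²)]. -/
noncomputable def entLike {Ω : Type*} [Fintype Ω] (π f : Ω → ℝ) : ℝ :=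
  ∑ x, π x * (f x ^ 2 * Real.log (f x ^ 2 / ∑ y, π y * f y ^ 2))

/-- The logarithmic Sobolev constant ρ(M). -/
noncomputable def sobolevConst {Ω : Type*} [Fintype Ω]
    (M : Ω → Ω → ℝ) (π : Ω → ℝ) : ℝ :=
  sInf {r | ∃ f : Ω → ℝ, entLike π f ≠ 0 ∧ r = dirichletForm M π f / entLike π f}

section helpers
variable {Ω : Type*} [Fintype Ω]

lemma entLike_eq_phi (π f : Ω → ℝ) (hπ1 : ∑ x, π x = 1)
    (hm : 0 < ∑ y, π y * f y ^ 2) :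
    entLike π f = ∑ x, π x *
      (f x ^ 2 * Real.log (f x ^ 2 / ∑ y, π y * f y ^ 2) - f x ^ 2 + ∑ y, π y * f y ^ 2) := by
  unfold entLike
  set m := ∑ y, π y * f y ^ 2 with hmdef
  have : ∀ x, π x * (f x ^ 2 * Real.log (f x ^ 2 / m) - f x ^ 2 + m)
      = π x * (f x ^ 2 * Real.log (f x ^ 2 / m)) - π x * f x ^ 2 + π x * m := by
    intro x; ring
  simp only [this, Finset.sum_add_distrib, Finset.sum_sub_distrib, ← Finset.sum_mul, hπ1,
    one_mul, ← hmdef]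
  ring

lemma entLike_zero_of_mean_zero (π f : Ω → ℝ) (hπ0 : ∀ x, 0 ≤ π x)
    (hm : ∑ y, π y * f y ^ 2 = 0) : entLike π f = 0 := by
  have h := (Finset.sum_eq_zero_iff_of_nonneg
    (fun x _ => mul_nonneg (hπ0 x) (sq_nonneg _))).mp hm
  unfold entLike
  apply Finset.sum_eq_zero
  intro x _
  have hx : π x * f x ^ 2 = 0 := h x (Finset.mem_univ x)
  calc π x * (f x ^ 2 * Real.log (f x ^ 2 / ∑ y, π y * f y ^ 2))
      = (π x * f x ^ 2) * Real.log (f x ^ 2 / ∑ y, π y * f y ^ 2) := by ring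
    _ = 0 := by rw [hx, zero_mul]

lemma entLike_nonneg (π f : Ω → ℝ) (hπ0 : ∀ x, 0 ≤ π x) (hπ1 : ∑ x, π x = 1) :
    0 ≤ entLike π f := by
  rcases eq_or_lt_of_le (Finset.sum_nonneg (fun y _ => mul_nonneg (hπ0 y) (sq_nonneg _)) :
      (0:ℝ) ≤ ∑ y, π y * f y ^ 2) with hm | hm
  · rw [entLike_zero_of_mean_zero π f hπ0 hm.symm]
  · rw [entLike_eq_phi π f hπ1 hm]
    exact Finset.sum_nonneg fun x _ => mul_nonneg (hπ0 x)
      (phi_nonneg _ _ (by positivity) hm)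

/-- Variational bound: entLike ≤ ∑ π φ(f², t) for any t > 0. -/
lemma entLike_le_phi (π f : Ω → ℝ) (hπ0 : ∀ x, 0 ≤ π x) (hπ1 : ∑ x, π x = 1)
    (t : ℝ) (ht : 0 < t) :
    entLike π f ≤ ∑ x, π x * (f x ^ 2 * Real.log (f x ^ 2 / t) - f x ^ 2 + t) := by
  set m := ∑ y, π y * f y ^ 2 with hmdef
  have hm0 : 0 ≤ m := Finset.sum_nonneg (fun y _ => mul_nonneg (hπ0 y) (sq_nonneg _))
  rcases eq_or_lt_of_le hm0 with hm | hm
  · rw [entLike_zero_of_mean_zero π f hπ0 hm.symm]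
    exact Finset.sum_nonneg fun x _ => mul_nonneg (hπ0 x)
      (phi_nonneg _ _ (by positivity) ht)
  · have key : ∀ x, π x * (f x ^ 2 * Real.log (f x ^ 2 / t) - f x ^ 2 + t)
        = π x * (f x ^ 2 * Real.log (f x ^ 2 / m))
          + (π x * f x ^ 2 * Real.log (m / t) - π x * f x ^ 2 + π x * t) := by
      intro x
      rw [log_split (f x ^ 2) m t (by positivity) hm ht]
      ring
    have h2 : ∑ x, (π x * f x ^ 2 * Real.log (m / t) - π x * f x ^ 2 + π x * t)
        = m * Real.log (m / t) - m + t := by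
      simp only [Finset.sum_add_distrib, Finset.sum_sub_distrib, ← Finset.sum_mul,
        hπ1, one_mul, ← hmdef]
    rw [Finset.sum_congr rfl (fun x _ => key x), Finset.sum_add_distrib, h2]
    unfold entLike
    rw [← hmdef]
    have := phi_nonneg m t hm0 ht
    linarith

/-- Entropy comparison: if π ≤ c·π' pointwise and the π'-mean of f² is positive,
then entLike π f ≤ c · entLike π' f. -/
lemma entLike_comp (π π' f : Ω → ℝ) (hπ0 : ∀ x, 0 ≤ π x) (hπ1 : ∑ x, π x = 1)
    (hπ'0 : ∀ x, 0 ≤ π' x) (hπ'1 : ∑ x, π' x = 1) (c : ℝ) (hc0 : 0 < c)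
    (hπhigh : ∀ x, π x ≤ c * π' x) (hm' : 0 < ∑ y, π' y * f y ^ 2) :
    entLike π f ≤ c * entLike π' f := by
  set m' := ∑ y, π' y * f y ^ 2 with hm'def
  calc entLike π f
      ≤ ∑ x, π x * (f x ^ 2 * Real.log (f x ^ 2 / m') - f x ^ 2 + m') :=
        entLike_le_phi π f hπ0 hπ1 m' hm'
    _ ≤ ∑ x, (c * π' x) * (f x ^ 2 * Real.log (f x ^ 2 / m') - f x ^ 2 + m') := by
        apply Finset.sum_le_sum
        intro x _
        exact mul_le_mul_of_nonneg_right (hπhigh x) (phi_nonneg _ _ (by positivity) hm')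
    _ = c * ∑ x, π' x * (f x ^ 2 * Real.log (f x ^ 2 / m') - f x ^ 2 + m') := by
        rw [Finset.mul_sum]
        exact Finset.sum_congr rfl fun x _ => by ring
    _ = c * entLike π' f := by rw [← entLike_eq_phi π' f hπ'1 hm']

lemma mean_pos_comp (π π' f : Ω → ℝ) (c : ℝ) (hc0 : 0 < c)
    (hπhigh : ∀ x, π x ≤ c * π' x) (hm : 0 < ∑ y, π y * f y ^ 2) :
    0 < ∑ y, π' y * f y ^ 2 := by
  have h : ∑ y, π y * f y ^ 2 ≤ c * ∑ y, π' y * f y ^ 2 := by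
    rw [Finset.mul_sum]
    apply Finset.sum_le_sum
    intro y _
    nlinarith [hπhigh y, sq_nonneg (f y)]
  nlinarith

lemma dirichlet_nonneg (M : Ω → Ω → ℝ) (π f : Ω → ℝ)
    (hM0 : ∀ x y, 0 ≤ M x y) (hπ0 : ∀ x, 0 ≤ π x) :
    0 ≤ dirichletForm M π f := by
  unfold dirichletForm
  apply mul_nonneg (by norm_num)
  apply Finset.sum_nonneg
  intro x _
  apply Finset.sum_nonneg
  intro y _
  exact mul_nonneg (mul_nonneg (sq_nonneg _) (hM0 x y)) (hπ0 x)

lemma dirichlet_comp (M M' : Ω → Ω → ℝ) (π π' f : Ω → ℝ)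
    (hM0 : ∀ x y, 0 ≤ M x y) (hM'0 : ∀ x y, 0 ≤ M' x y)
    (hπ0 : ∀ x, 0 ≤ π x) (hπ'0 : ∀ x, 0 ≤ π' x) (c : ℝ) (hc0 : 0 < c)
    (hMcomp : ∀ x y, x ≠ y → (1 / c) * M' x y ≤ M x y)
    (hπlow : ∀ x, (1 / c) * π' x ≤ π x) :
    (1 / c ^ 2) * dirichletForm M' π' f ≤ dirichletForm M π f := by
  have key : ∀ x y, (1 / c ^ 2) * ((f x - f y) ^ 2 * M' x y * π' x)
      ≤ (f x - f y) ^ 2 * M x y * π x := by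
    intro x y
    by_cases h : x = y
    · subst h
      simp only [sub_self]
      simp
    · have h1 : (1 / c) * M' x y ≤ M x y := hMcomp x y h
      have h2 : (1 / c) * π' x ≤ π x := hπlow x
      have h3 : ((1 / c) * M' x y) * ((1 / c) * π' x) ≤ M x y * π x :=
        mul_le_mul h1 h2 (mul_nonneg (by positivity) (hπ'0 x))
          (le_trans (mul_nonneg (by positivity) (hM'0 x y)) h1)
      calc (1 / c ^ 2) * ((f x - f y) ^ 2 * M' x y * π' x)
          = (f x - f y) ^ 2 * (((1 / c) * M' x y) * ((1 / c) * π' x)) := by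
            field_simp
        _ ≤ (f x - f y) ^ 2 * (M x y * π x) :=
            mul_le_mul_of_nonneg_left h3 (sq_nonneg _)
        _ = (f x - f y) ^ 2 * M x y * π x := by ring
  unfold dirichletForm
  calc (1 / c ^ 2) * ((1 / 2) * ∑ x, ∑ y, (f x - f y) ^ 2 * M' x y * π' x)
      = (1 / 2) * ∑ x, ∑ y, (1 / c ^ 2) * ((f x - f y) ^ 2 * M' x y * π' x) := by
        rw [show (1 / c ^ 2) * ((1 / 2) * ∑ x, ∑ y, (f x - f y) ^ 2 * M' x y * π' x)
          = (1 / 2) * ((1 / c ^ 2) * ∑ x, ∑ y, (f x - f y) ^ 2 * M' x y * π' x) from by ring]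
        simp only [Finset.mul_sum]
    _ ≤ (1 / 2) * ∑ x, ∑ y, (f x - f y) ^ 2 * M x y * π x := by
        apply mul_le_mul_of_nonneg_left _ (by norm_num)
        exact Finset.sum_le_sum fun x _ => Finset.sum_le_sum fun y _ => key x y

end helpers

/-- Comparison of Sobolev constants of two reversible kernels. -/
theorem stmt_12 {Ω : Type*} [Fintype Ω] (M M' : Ω → Ω → ℝ) (π π' : Ω → ℝ)
    (hM0 : ∀ x y, 0 ≤ M x y) (hM1 : ∀ x, ∑ y, M x y = 1)
    (hM'0 : ∀ x y, 0 ≤ M' x y) (hM'1 : ∀ x, ∑ y, M' x y = 1)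
    (hπ0 : ∀ x, 0 < π x) (hπ1 : ∑ x, π x = 1)
    (hπ'0 : ∀ x, 0 < π' x) (hπ'1 : ∑ x, π' x = 1)
    (hrev : ∀ x y, π x * M x y = π y * M y x)
    (hrev' : ∀ x y, π' x * M' x y = π' y * M' y x)
    (c : ℝ) (hc : 1 ≤ c)
    (hMcomp : ∀ x y, x ≠ y → (1 / c) * M' x y ≤ M x y)
    (hπlow : ∀ x, (1 / c) * π' x ≤ π x) (hπhigh : ∀ x, π x ≤ c * π' x) :
    sobolevConst M π ≥ (1 / c ^ 3) * sobolevConst M' π' := by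
  have hc0 : (0:ℝ) < c := lt_of_lt_of_le one_pos hc
  have hπ0' : ∀ x, 0 ≤ π x := fun x => (hπ0 x).le
  have hπ'0' : ∀ x, 0 ≤ π' x := fun x => (hπ'0 x).le
  have hπ'high : ∀ x, π' x ≤ c * π x := by
    intro x
    have h := hπlow x
    have h2 : c * ((1 / c) * π' x) ≤ c * π x := mul_le_mul_of_nonneg_left h hc0.le
    have h3 : c * ((1 / c) * π' x) = π' x := by field_simp
    linarith
  set S : Set ℝ := {r | ∃ f : Ω → ℝ, entLike π f ≠ 0 ∧ r = dirichletForm M π f / entLike π f}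
    with hSdef
  set S' : Set ℝ :=
    {r | ∃ f : Ω → ℝ, entLike π' f ≠ 0 ∧ r = dirichletForm M' π' f / entLike π' f} with hS'def
  have hbdd' : BddBelow S' := by
    refine ⟨0, ?_⟩
    rintro r ⟨f, hf, rfl⟩
    have hL' : 0 < entLike π' f := (entLike_nonneg π' f hπ'0' hπ'1).lt_of_ne (Ne.symm hf)
    exact div_nonneg (dirichlet_nonneg M' π' f hM'0 hπ'0') hL'.le
  by_cases hS : S.Nonempty
  · rw [ge_iff_le]
    show (1 / c ^ 3) * sInf S' ≤ sInf S
    apply le_csInf hS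
    rintro r ⟨f, hf, rfl⟩
    have hL : 0 < entLike π f := (entLike_nonneg π f hπ0' hπ1).lt_of_ne (Ne.symm hf)
    have hm : 0 < ∑ y, π y * f y ^ 2 := by
      rcases eq_or_lt_of_le (Finset.sum_nonneg
        (fun y _ => mul_nonneg (hπ0' y) (sq_nonneg _)) :
        (0:ℝ) ≤ ∑ y, π y * f y ^ 2) with h | h
      · exact absurd (entLike_zero_of_mean_zero π f hπ0' h.symm) hf
      · exact h
    have hm' : 0 < ∑ y, π' y * f y ^ 2 := mean_pos_comp π π' f c hc0 hπhigh hm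
    have hLc : entLike π f ≤ c * entLike π' f :=
      entLike_comp π π' f hπ0' hπ1 hπ'0' hπ'1 c hc0 hπhigh hm'
    have hL' : 0 < entLike π' f := by nlinarith
    have hmem : dirichletForm M' π' f / entLike π' f ∈ S' := ⟨f, hL'.ne', rfl⟩
    have h1 : sInf S' ≤ dirichletForm M' π' f / entLike π' f := csInf_le hbdd' hmem
    have hE' : 0 ≤ dirichletForm M' π' f := dirichlet_nonneg M' π' f hM'0 hπ'0'
    have hEc : (1 / c ^ 2) * dirichletForm M' π' f ≤ dirichletForm M π f :=
      dirichlet_comp M M' π π' f hM0 hM'0 hπ0' hπ'0' c hc0 hMcomp hπlow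
    have h2 : (1 / c ^ 3) * (dirichletForm M' π' f / entLike π' f)
        ≤ dirichletForm M π f / entLike π f := by
      have heq : (1 / c ^ 3) * (dirichletForm M' π' f / entLike π' f)
          = ((1 / c ^ 2) * dirichletForm M' π' f) / (c * entLike π' f) := by
        rw [eq_div_iff (mul_pos hc0 hL').ne']
        field_simp [hL'.ne']
      rw [heq]
      exact div_le_div₀ (dirichlet_nonneg M π f hM0 hπ0') hEc hL hLc
    calc (1 / c ^ 3) * sInf S'
        ≤ (1 / c ^ 3) * (dirichletForm M' π' f / entLike π' f) :=
          mul_le_mul_of_nonneg_left h1 (by positivity)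
      _ ≤ dirichletForm M π f / entLike π f := h2
  · have hS' : ¬ S'.Nonempty := by
      rintro ⟨r, f, hf', rfl⟩
      apply hS
      have hL' : 0 < entLike π' f := (entLike_nonneg π' f hπ'0' hπ'1).lt_of_ne (Ne.symm hf')
      have hm' : 0 < ∑ y, π' y * f y ^ 2 := by
        rcases eq_or_lt_of_le (Finset.sum_nonneg
          (fun y _ => mul_nonneg (hπ'0' y) (sq_nonneg _)) :
          (0:ℝ) ≤ ∑ y, π' y * f y ^ 2) with h | h
        · exact absurd (entLike_zero_of_mean_zero π' f hπ'0' h.symm) hf'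
        · exact h
      have hm : 0 < ∑ y, π y * f y ^ 2 := mean_pos_comp π' π f c hc0 hπ'high hm'
      have hLc : entLike π' f ≤ c * entLike π f :=
        entLike_comp π' π f hπ'0' hπ'1 hπ0' hπ1 c hc0 hπ'high hm
      have hL : 0 < entLike π f := by nlinarith
      exact ⟨_, f, hL.ne', rfl⟩
    rw [Set.not_nonempty_iff_eq_empty] at hS hS'
    show (1 / c ^ 3) * sInf S' ≤ sInf S
    rw [hS, hS', Real.sInf_empty]
    simp
end

section
/- In the two-population resource allocation game of the previous context, the allocation with all of N_1 on r_2 and all of N_2 on r_3 (i.e., a = 0 players of N_1 on r_1 and b = 0 players of N_2 on r_2) is a Nash equilibrium under marginal-contribution utilities: no single player can strictly increase the total welfare W by unilaterally switching resources. -/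
/-- The allocation with all of N₁ on r₂ and all of N₂ on r₃, i.e. (a,b) = (0,0),
is a Nash equilibrium: no unilateral deviation increases the total welfare. -/
theorem stmt_18 (n : ℕ) (hn : Even n) (hpos : 1 ≤ n / 2)
    (W : ℕ → ℕ → ℕ)
    (hW : ∀ a b, W a b = 2 * a + min (3 * (n / 2 - a + b)) (3 * n / 2) + (n / 2 - b)) :
    W 1 0 ≤ W 0 0 ∧ W 0 1 ≤ W 0 0 := by
  obtain ⟨k, rfl⟩ := hn
  rw [hW, hW, hW]
  omega
end

section
/- Let φ: Ω → [0,1], let ε ∈ (0,1), λ > ε/4, and suppose Ω is a finite metric space of diameter ≤ 1 on which φ is λ-Lipschitz, with x* maximizing φ, and suppose for δ = ε/(4λ) ∈ (0,1) the ball B(x*, δ) satisfies |B(x*,δ)|/|Ω| ≥ (δ/(2N))^K for constants K ≥ 1, N ≥ 2. If β ≥ (4K/ε) log(8λN/ε) then the Gibbs distribution π^β satisfies E_{π^β}[φ] ≥ φ(x*) − ε/2. -/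
open Finset Real

/-- `u e^{-βu} ≤ 1/β` for `β > 0`. -/
lemma gibbs_aux_19 (β u : ℝ) (hβ : 0 < β) : u * Real.exp (-(β * u)) ≤ 1 / β := by
  rcases le_or_gt u 0 with hu | hu
  · have h1 : u * Real.exp (-(β * u)) ≤ 0 :=
      mul_nonpos_of_nonpos_of_nonneg hu (Real.exp_pos _).le
    have h2 : (0:ℝ) ≤ 1 / β := by positivity
    linarith
  · have h1 : β * u ≤ Real.exp (β * u) := by
      nlinarith [Real.add_one_le_exp (β * u)]
    have h2 : u ≤ 1 / β * Real.exp (β * u) := by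
      rw [div_mul_eq_mul_div, one_mul, le_div_iff₀ hβ]
      nlinarith
    calc u * Real.exp (-(β * u)) ≤ (1 / β * Real.exp (β * u)) * Real.exp (-(β * u)) := by
          exact mul_le_mul_of_nonneg_right h2 (Real.exp_pos _).le
      _ = 1 / β := by
          rw [mul_assoc, ← Real.exp_add, add_neg_cancel, Real.exp_zero, mul_one]

set_option maxHeartbeats 1000000 in
/-- If λ > ε/4, δ = ε/(4λ) and β ≥ (4K/ε) log(8λN/ε), the Gibbs expectation is
within ε/2 of the maximum. -/
theorem stmt_19 {Ω : Type*} [Fintype Ω] [Nonempty Ω] [MetricSpace Ω]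
    (φ : Ω → ℝ) (hφ : ∀ x, φ x ∈ Set.Icc (0 : ℝ) 1)
    (ε : ℝ) (hε0 : 0 < ε) (hε1 : ε < 1)
    (lam : ℝ) (hlam : ε / 4 < lam)
    (hdiam : ∀ x y : Ω, dist x y ≤ 1)
    (hlip : ∀ x y, |φ x - φ y| ≤ lam * dist x y)
    (xs : Ω) (hxs : ∀ x, φ x ≤ φ xs)
    (K N : ℝ) (hK : 1 ≤ K) (hN : 2 ≤ N)
    (hball : (Nat.card {x : Ω // dist x xs ≤ ε / (4 * lam)} : ℝ) /
        (Fintype.card Ω : ℝ) ≥ (ε / (4 * lam) / (2 * N)) ^ K)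
    (β : ℝ) (hβ : β ≥ (4 * K / ε) * Real.log (8 * lam * N / ε)) :
    ∑ x, φ x * (Real.exp (β * φ x) / ∑ y, Real.exp (β * φ y)) ≥ φ xs - ε / 2 := by
  classical
  have hlam0 : 0 < lam := lt_trans (by positivity) hlam
  set δ : ℝ := ε / (4 * lam) with hδ
  have hδ0 : 0 < δ := by positivity
  have hN0 : 0 < N := by linarith
  set r : ℝ := δ / (2 * N) with hr
  have hr0 : 0 < r := by positivity
  have hrK : 0 < r ^ K := Real.rpow_pos_of_pos hr0 K
  have hinv : (8 * lam * N / ε) = 1 / r := by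
    rw [hr, hδ]; field_simp; ring
  have hL4 : (4:ℝ) ≤ 8 * lam * N / ε := by
    rw [le_div_iff₀ hε0]; nlinarith
  have hlog1 : 1 ≤ Real.log (8 * lam * N / ε) := by
    rw [Real.le_log_iff_exp_le (by linarith)]
    calc Real.exp 1 ≤ 2.7182818286 := Real.exp_one_lt_d9.le
      _ ≤ 4 := by norm_num
      _ ≤ 8 * lam * N / ε := hL4
  have hβ4 : 4 / ε ≤ β := by
    have h1 : 4 * K / ε ≤ (4 * K / ε) * Real.log (8 * lam * N / ε) := by
      nlinarith [mul_le_mul_of_nonneg_left hlog1 (le_of_lt (show (0:ℝ) < 4 * K / ε by positivity))]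
    have h2 : 4 / ε ≤ 4 * K / ε := by
      gcongr
      linarith
    linarith
  have hβ0 : 0 < β := lt_of_lt_of_le (by positivity) hβ4
  have hexpβ : Real.exp (-(β * (ε/4))) ≤ r ^ K := by
    rw [← Real.exp_log hrK, Real.exp_le_exp, Real.log_rpow hr0]
    have hlr : Real.log r = - Real.log (8 * lam * N / ε) := by
      rw [hinv, one_div, Real.log_inv, neg_neg]
    rw [hlr]
    have : K * Real.log (8 * lam * N / ε) ≤ β * (ε/4) := by
      have := mul_le_mul_of_nonneg_left hβ (le_of_lt (show (0:ℝ) < ε/4 by positivity))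
      calc K * Real.log (8 * lam * N / ε)
          = (ε/4) * ((4 * K / ε) * Real.log (8 * lam * N / ε)) := by field_simp
        _ ≤ (ε/4) * β := this
        _ = β * (ε/4) := by ring
    linarith
  set Z : ℝ := ∑ y, Real.exp (β * φ y) with hZ
  have hZ0 : 0 < Z := Finset.sum_pos (fun y _ => Real.exp_pos _) univ_nonempty
  set c : ℝ := Real.exp (β * (φ xs - ε/4)) with hc
  have hc0 : 0 < c := Real.exp_pos _
  set S : Finset Ω := univ.filter (fun x => dist x xs ≤ δ) with hS
  have hbS : (Nat.card {x : Ω // dist x xs ≤ δ} : ℝ) = (S.card : ℝ) := by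
    rw [Nat.card_eq_fintype_card, Fintype.card_subtype]
  have hxsS : xs ∈ S := by
    rw [hS, mem_filter]
    exact ⟨mem_univ _, by simp [dist_self]; positivity⟩
  have hn0 : 0 < (Fintype.card Ω : ℝ) := by
    exact_mod_cast Fintype.card_pos
  have hcard : r ^ K * (Fintype.card Ω : ℝ) ≤ (S.card : ℝ) := by
    have h := hball
    rw [ge_iff_le, le_div_iff₀ hn0, hbS] at h
    linarith
  -- pointwise key bound
  have key : ∀ x : Ω, (φ xs - φ x) * Real.exp (β * φ x) ≤
      ε/2 * Real.exp (β * φ x)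
      - (if x ∈ S then ε/4 * c else 0)
      + (if ε/2 < φ xs - φ x then ε/4 * (r^K * c) else 0) := by
    intro x
    have hgap0 : 0 ≤ φ xs - φ x := sub_nonneg.mpr (hxs x)
    have hE0 : (0:ℝ) < Real.exp (β * φ x) := Real.exp_pos _
    by_cases hSx : x ∈ S
    · have hd : dist x xs ≤ δ := by
        rw [hS, mem_filter] at hSx; exact hSx.2
      have hg : φ xs - φ x ≤ ε/4 := by
        have h1 := hlip xs x
        have h2 : dist xs x = dist x xs := dist_comm _ _
        have h3 : lam * dist xs x ≤ lam * δ := by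
          rw [h2]; exact mul_le_mul_of_nonneg_left hd hlam0.le
        have h4 : lam * δ = ε/4 := by rw [hδ]; field_simp
        have h5 : φ xs - φ x ≤ |φ xs - φ x| := le_abs_self _
        linarith
      have hnot : ¬ (ε/2 < φ xs - φ x) := by push_neg; linarith
      simp only [if_pos hSx, if_neg hnot, add_zero]
      have hcle : c ≤ Real.exp (β * φ x) := by
        rw [hc, Real.exp_le_exp]
        exact mul_le_mul_of_nonneg_left (by linarith) hβ0.le
      nlinarith
    · simp only [if_neg hSx]
      by_cases hg2 : ε/2 < φ xs - φ x
      · simp only [if_pos hg2]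
        have hE : Real.exp (β * φ x)
            = Real.exp (-(β * (φ xs - φ x - ε/2))) * Real.exp (-(β * (ε/4))) * c := by
          rw [hc, ← Real.exp_add, ← Real.exp_add]
          congr 1; ring
        have h1 : (φ xs - φ x - ε/2) * Real.exp (-(β * (φ xs - φ x - ε/2))) ≤ ε/4 := by
          refine (gibbs_aux_19 β _ hβ0).trans ?_
          rw [div_le_iff₀ hβ0]
          have := mul_le_mul_of_nonneg_left hβ4 (le_of_lt (show (0:ℝ) < ε/4 by positivity))
          calc (1:ℝ) = ε/4 * (4/ε) := by field_simp
            _ ≤ ε/4 * β := this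
        have h2 : Real.exp (-(β * (ε/4))) ≤ r ^ K := hexpβ
        have hEp1 : (0:ℝ) < Real.exp (-(β * (φ xs - φ x - ε/2))) := Real.exp_pos _
        have hEp2 : (0:ℝ) < Real.exp (-(β * (ε/4))) := Real.exp_pos _
        have hmain : (φ xs - φ x - ε/2) * Real.exp (β * φ x) ≤ ε/4 * (r^K * c) := by
          rw [hE]
          calc (φ xs - φ x - ε/2) * (Real.exp (-(β * (φ xs - φ x - ε/2))) * Real.exp (-(β * (ε/4))) * c)
              = ((φ xs - φ x - ε/2) * Real.exp (-(β * (φ xs - φ x - ε/2)))) * Real.exp (-(β * (ε/4))) * c := by ring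
            _ ≤ (ε/4) * (r^K) * c := by
                apply mul_le_mul_of_nonneg_right _ hc0.le
                apply mul_le_mul h1 h2 hEp2.le (by positivity)
            _ = ε/4 * (r^K * c) := by ring
        have hring : (φ xs - φ x) * Real.exp (β * φ x)
            = (φ xs - φ x - ε/2) * Real.exp (β * φ x) + ε/2 * Real.exp (β * φ x) := by ring
        rw [hring]
        linarith
      · simp only [if_neg hg2]
        push_neg at hg2
        linarith [mul_le_mul_of_nonneg_right hg2 hE0.le]
  -- summed bound
  set T : Finset Ω := univ.filter (fun x => ε/2 < φ xs - φ x) with hT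
  have hsum : ∑ x, (φ xs - φ x) * Real.exp (β * φ x) ≤ ε/2 * Z := by
    have step1 : ∑ x, (φ xs - φ x) * Real.exp (β * φ x) ≤
        ∑ x, (ε/2 * Real.exp (β * φ x)
          - (if x ∈ S then ε/4 * c else 0)
          + (if ε/2 < φ xs - φ x then ε/4 * (r^K * c) else 0)) :=
      Finset.sum_le_sum (fun x _ => key x)
    have step2 : ∑ x, (ε/2 * Real.exp (β * φ x)
          - (if x ∈ S then ε/4 * c else 0)
          + (if ε/2 < φ xs - φ x then ε/4 * (r^K * c) else 0))
        = ε/2 * Z - (S.card : ℝ) * (ε/4 * c) + (T.card : ℝ) * (ε/4 * (r^K * c)) := by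
      rw [Finset.sum_add_distrib, Finset.sum_sub_distrib, ← Finset.mul_sum]
      congr 1
      · congr 1
        rw [← Finset.sum_filter]
        have : univ.filter (fun x => x ∈ S) = S := by
          ext y; simp [hS]
        rw [this, Finset.sum_const, nsmul_eq_mul]
      · rw [← Finset.sum_filter, ← hT, Finset.sum_const, nsmul_eq_mul]
    have hTcard : (T.card : ℝ) ≤ (Fintype.card Ω : ℝ) := by
      exact_mod_cast Finset.card_le_univ T
    have h3 : r ^ K * (T.card : ℝ) ≤ (S.card : ℝ) := by
      calc r ^ K * (T.card : ℝ) ≤ r ^ K * (Fintype.card Ω : ℝ) := by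
            exact mul_le_mul_of_nonneg_left hTcard hrK.le
        _ ≤ (S.card : ℝ) := hcard
    have h4 : (T.card : ℝ) * (ε/4 * (r^K * c)) ≤ (S.card : ℝ) * (ε/4 * c) := by
      have := mul_le_mul_of_nonneg_right h3 (le_of_lt (show (0:ℝ) < ε/4 * c by positivity))
      calc (T.card : ℝ) * (ε/4 * (r^K * c)) = (r^K * (T.card : ℝ)) * (ε/4 * c) := by ring
        _ ≤ (S.card : ℝ) * (ε/4 * c) := this
    linarith [step1, step2.le, step2.ge]
  -- conclude
  have hfin : ∑ x, φ x * (Real.exp (β * φ x) / Z) = (∑ x, φ x * Real.exp (β * φ x)) / Z := by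
    rw [Finset.sum_div]
    exact Finset.sum_congr rfl (fun x _ => by rw [mul_div_assoc])
  rw [ge_iff_le, hfin, le_div_iff₀ hZ0]
  have hexp : ∑ x, (φ xs - φ x) * Real.exp (β * φ x)
      = φ xs * Z - ∑ x, φ x * Real.exp (β * φ x) := by
    rw [hZ, Finset.mul_sum, ← Finset.sum_sub_distrib]
    exact Finset.sum_congr rfl (fun x _ => by ring)
  have hgoal : (φ xs - ε/2) * Z = φ xs * Z - ε/2 * Z := by ring
  rw [hgoal]
  linarith [hsum, hexp.le, hexp.ge]
end
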